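/- Let 𝒜 be an abelian category with a central charge Z : K₀(𝒜) → ℂ valued (on nonzero objects) in {r e^{iπφ} : r > 0, 0 < φ ≤ 1}. Suppose (1) there is no infinite descending chain of subobjects ⋯ ⊂ E_{j+1} ⊂ E_j ⊂ ⋯ ⊂ E₁ with φ(E_{j+1}) > φ(E_j) for all j, and (2) there is no infinite chain of quotients E₁ ↠ E₂ ↠ ⋯ with φ(E_j) > φ(E_{j+1}) for all j. Then Z has the Harder–Narasimhan property. -/

import Mathlib

open CategoryTheory Limits

namespace Stmt2

variable {C : Type*} [Category C] [Abelian C]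

/-- A central charge (stability function): additive on short exact sequences (equivalently a
group homomorphism `K₀(𝒜) → ℂ`), sending every nonzero object into the semiclosed upper half
plane `{r e^{iπφ} : r > 0, 0 < φ ≤ 1}`. -/
structure CentralCharge (C : Type*) [Category C] [Abelian C] where
  Z : C → ℂ
  additive : ∀ S : ShortComplex C, S.ShortExact → Z S.X₂ = Z S.X₁ + Z S.X₃
  upper_half : ∀ X : C, ¬ IsZero X → 0 < (Z X).arg ∧ (Z X).arg ≤ Real.pi

/-- The phase `φ(E) ∈ (0,1]` of a nonzero object. -/
noncomputable def CentralCharge.phase (Z : CentralCharge C) (X : C) : ℝ :=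
  (Z.Z X).arg / Real.pi

/-- `E` is `Z`-semistable if it is nonzero and every nonzero subobject has phase `≤ φ(E)`. -/
def CentralCharge.Semistable (Z : CentralCharge C) (E : C) : Prop :=
  ¬ IsZero E ∧ ∀ F : Subobject E, F ≠ ⊥ → Z.phase (F : C) ≤ Z.phase E

/-- The subquotient `F j.succ / F j.castSucc` of a monotone chain of subobjects. -/
noncomputable def quotObj {E : C} {n : ℕ} (F : Fin (n + 1) → Subobject E)
    (hF : Monotone F) (j : Fin n) : C :=
  cokernel (Subobject.ofLE (F j.castSucc) (F j.succ) (hF (Fin.castSucc_lt_succ : j.castSucc < j.succ).le))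

/-- `Z` has the Harder–Narasimhan property. -/
def CentralCharge.HasHN (Z : CentralCharge C) : Prop :=
  ∀ E : C, ¬ IsZero E → ∃ (n : ℕ) (F : Fin (n + 1) → Subobject E) (hF : Monotone F),
    F 0 = ⊥ ∧ F (Fin.last n) = ⊤ ∧
    (∀ j : Fin n, Z.Semistable (quotObj F hF j)) ∧
    (∀ j k : Fin n, j < k → Z.phase (quotObj F hF k) < Z.phase (quotObj F hF j))


/-! ### Cross product toolkit on ℂ -/

/-- The cross product of two complex numbers. -/
def cross (z w : ℂ) : ℝ := z.re * w.im - z.im * w.re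

lemma cross_antisymm (z w : ℂ) : cross w z = - cross z w := by simp [cross]; ring

lemma cross_add_right (z w u : ℂ) : cross z (w + u) = cross z w + cross z u := by
  simp [cross]; ring

lemma cross_self (z : ℂ) : cross z z = 0 := by simp [cross]; ring

lemma cross_add_left (z w u : ℂ) : cross (z + w) u = cross z u + cross w u := by
  simp [cross]; ring

/-- seesaw: if `m = x + t` then comparing `x` with `m` is comparing `x` with `t`. -/
lemma cross_left_eq {m x t : ℂ} (h : m = x + t) : cross x m = cross x t := by
  rw [h, cross_add_right, cross_self, zero_add]

lemma cross_right_eq {m x t : ℂ} (h : m = x + t) : cross m t = cross x t := by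
  rw [h, cross_add_left, cross_self, add_zero]

lemma cross_left_eq' {m x t : ℂ} (h : m = x + t) : cross t m = cross t x := by
  rw [h, cross_add_right, cross_self, add_zero]

lemma cross_right_eq' {m x t : ℂ} (h : m = x + t) : cross m x = cross t x := by
  rw [h, cross_add_left, cross_self, zero_add]

lemma cross_eq_sin (z w : ℂ) :
    cross z w = ‖z‖ * ‖w‖ * Real.sin (w.arg - z.arg) := by
  rw [Real.sin_sub]
  have h1 := Complex.norm_mul_cos_arg z
  have h2 := Complex.norm_mul_sin_arg z
  have h3 := Complex.norm_mul_cos_arg w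
  have h4 := Complex.norm_mul_sin_arg w
  simp only [cross]
  rw [← h1, ← h2, ← h3, ← h4]
  ring

lemma arg_lt_arg_iff {z w : ℂ} (hz1 : 0 < z.arg) (hz2 : z.arg ≤ Real.pi)
    (hw1 : 0 < w.arg) (hw2 : w.arg ≤ Real.pi) :
    z.arg < w.arg ↔ 0 < cross z w := by
  have hz0 : z ≠ 0 := fun h => by simp [h, Complex.arg_zero] at hz1
  have hw0 : w ≠ 0 := fun h => by simp [h, Complex.arg_zero] at hw1
  have haz : 0 < ‖z‖ := norm_pos_iff.mpr hz0
  have haw : 0 < ‖w‖ := norm_pos_iff.mpr hw0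
  rw [cross_eq_sin]
  have hd1 : w.arg - z.arg < Real.pi := by linarith
  have hd2 : -Real.pi < w.arg - z.arg := by linarith
  constructor
  · intro h
    have : 0 < Real.sin (w.arg - z.arg) :=
      Real.sin_pos_of_pos_of_lt_pi (by linarith) hd1
    positivity
  · intro h
    by_contra hc
    push_neg at hc
    have hs : Real.sin (w.arg - z.arg) ≤ 0 := by
      rcases eq_or_lt_of_le hc with he | hl
      · rw [he]; simp
      · have : 0 < Real.sin (z.arg - w.arg) :=
          Real.sin_pos_of_pos_of_lt_pi (by linarith) (by linarith)
        have : Real.sin (w.arg - z.arg) = - Real.sin (z.arg - w.arg) := by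
          rw [← Real.sin_neg]; ring_nf
        linarith
    nlinarith [mul_pos haz haw]

lemma arg_le_arg_iff {z w : ℂ} (hz1 : 0 < z.arg) (hz2 : z.arg ≤ Real.pi)
    (hw1 : 0 < w.arg) (hw2 : w.arg ≤ Real.pi) :
    z.arg ≤ w.arg ↔ 0 ≤ cross z w := by
  rw [← not_lt, arg_lt_arg_iff hw1 hw2 hz1 hz2, cross_antisymm]
  constructor
  · intro h; nlinarith [not_lt.mp h]
  · intro h; rw [not_lt]; linarith

namespace CentralCharge

variable (Z : CentralCharge C)

/-- nonzero into zero object etc. -/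
lemma nz_of_epi {X Y : C} (f : X ⟶ Y) [Epi f] (hY : ¬ IsZero Y) : ¬ IsZero X := by
  intro hX
  apply hY
  rw [IsZero.iff_id_eq_zero]
  have hf : f = 0 := hX.eq_of_src f 0
  rw [← cancel_epi f, hf]
  simp

lemma nz_of_mono {X Y : C} (f : X ⟶ Y) [Mono f] (hX : ¬ IsZero X) : ¬ IsZero Y := by
  intro hY
  apply hX
  rw [IsZero.iff_id_eq_zero]
  have hf : f = 0 := hY.eq_of_tgt f 0
  rw [← cancel_mono f, hf]
  simp

lemma isZero_of_mono_eq_zero {X Y : C} (f : X ⟶ Y) [Mono f] (hf : f = 0) : IsZero X := by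
  rw [IsZero.iff_id_eq_zero, ← cancel_mono f, hf]
  simp

/-- Z of a zero object is 0. -/
lemma Z_isZero {X : C} (h : IsZero X) : Z.Z X = 0 := by
  have hS : (ShortComplex.mk (𝟙 X) (𝟙 X) (h.eq_of_src _ _)).ShortExact :=
    ShortComplex.ShortExact.mk' (ShortComplex.exact_of_isZero_X₂ _ h) inferInstance inferInstance
  have := Z.additive _ hS
  simp only [ShortComplex.mk] at this
  linear_combination -this

/-- The fundamental SES for a mono. -/
lemma Z_cokernel {A B : C} (f : A ⟶ B) [Mono f] :
    Z.Z B = Z.Z A + Z.Z (cokernel f) := by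
  have hS : (ShortComplex.mk f (cokernel.π f) (by simp)).ShortExact :=
    ShortComplex.ShortExact.mk'
      (ShortComplex.exact_of_g_is_cokernel _ (cokernelIsCokernel f)) inferInstance inferInstance
  exact Z.additive _ hS

lemma isZero_cokernel_of_epi {A B : C} (f : A ⟶ B) [Epi f] : IsZero (cokernel f) := by
  have : cokernel.π f = 0 := by
    rw [← cancel_epi f]
    simp
  rw [IsZero.iff_id_eq_zero, ← cancel_epi (cokernel.π f), this]
  simp

lemma epi_of_isZero_cokernel {A B : C} (f : A ⟶ B) (h : IsZero (cokernel f)) : Epi f := by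
  have hπ : cokernel.π f = 0 := h.eq_of_tgt _ _
  constructor
  intro W u v huv
  have : u - v = 0 := by
    have h0 : f ≫ (u - v) = 0 := by simp [huv]
    have := cokernel.π_desc f (u - v) h0
    rw [hπ] at this
    simpa using this.symm
  rw [← sub_eq_zero]
  exact this

lemma Z_iso {X Y : C} (e : X ≅ Y) : Z.Z X = Z.Z Y := by
  have := Z_cokernel Z e.hom
  rw [Z_isZero Z (isZero_cokernel_of_epi e.hom)] at this
  simpa using this.symm

lemma phase_congr {X Y : C} (h : Z.Z X = Z.Z Y) : Z.phase X = Z.phase Y := by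
  simp [phase, h]

lemma phase_iso {X Y : C} (e : X ≅ Y) : Z.phase X = Z.phase Y :=
  Z.phase_congr (Z.Z_iso e)

lemma Z_ne_zero {X : C} (h : ¬ IsZero X) : Z.Z X ≠ 0 := by
  intro h0
  have := (Z.upper_half X h).1
  rw [h0] at this
  simp [Complex.arg_zero] at this

lemma phase_lt_iff {X Y : C} (hX : ¬ IsZero X) (hY : ¬ IsZero Y) :
    Z.phase X < Z.phase Y ↔ 0 < cross (Z.Z X) (Z.Z Y) := by
  have hX' := Z.upper_half X hX
  have hY' := Z.upper_half Y hY
  rw [phase, phase, div_lt_div_iff_of_pos_right Real.pi_pos]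
  exact arg_lt_arg_iff hX'.1 hX'.2 hY'.1 hY'.2

lemma phase_le_iff {X Y : C} (hX : ¬ IsZero X) (hY : ¬ IsZero Y) :
    Z.phase X ≤ Z.phase Y ↔ 0 ≤ cross (Z.Z X) (Z.Z Y) := by
  have hX' := Z.upper_half X hX
  have hY' := Z.upper_half Y hY
  rw [phase, phase, div_le_div_iff_of_pos_right Real.pi_pos]
  exact arg_le_arg_iff hX'.1 hX'.2 hY'.1 hY'.2

/-- Z of a kernel: `Z A = Z (kernel g) + Z B` for an epi `g : A ⟶ B`. -/
lemma Z_kernel {A B : C} (g : A ⟶ B) [Epi g] :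
    Z.Z A = Z.Z (kernel g) + Z.Z B := by
  have h := Z_cokernel Z (kernel.ι g)
  have e : cokernel (kernel.ι g) ≅ B :=
    IsColimit.coconePointUniqueUpToIso (cokernelIsCokernel (kernel.ι g))
      (Abelian.epiIsCokernelOfKernel (KernelFork.ofι (kernel.ι g) (kernel.condition g))
        (kernelIsKernel g))
  rwa [Z.Z_iso e] at h


lemma isZero_bot {E : C} : IsZero (((⊥ : Subobject E) : C)) :=
  (isZero_zero C).of_iso Subobject.botCoeIsoZero

lemma eq_bot_iff_isZero {E : C} (F : Subobject E) : F = ⊥ ↔ IsZero (F : C) := by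
  constructor
  · intro h; rw [h]; exact isZero_bot
  · intro h
    rw [← Subobject.mk_arrow F, Subobject.mk_eq_bot_iff_zero]
    exact h.eq_of_src _ _


lemma semistable_iff_mono (E : C) :
    Z.Semistable E ↔ ¬ IsZero E ∧
      ∀ (X : C) (f : X ⟶ E), Mono f → ¬ IsZero X → Z.phase X ≤ Z.phase E := by
  constructor
  · rintro ⟨hE, h⟩
    refine ⟨hE, fun X f hf hX => ?_⟩
    have := hf
    have h1 : Subobject.mk f ≠ ⊥ := by
      rw [Ne, Subobject.mk_eq_bot_iff_zero]
      intro h0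
      exact hX (isZero_of_mono_eq_zero f h0)
    have h2 := h (Subobject.mk f) h1
    rwa [Z.phase_iso (Subobject.underlyingIso f)] at h2
  · rintro ⟨hE, h⟩
    refine ⟨hE, fun F hF => ?_⟩
    refine h (F : C) F.arrow inferInstance ?_
    rw [← eq_bot_iff_isZero] at *
    exact hF

lemma semistable_of_iso {X Y : C} (e : X ≅ Y) (h : Z.Semistable X) : Z.Semistable Y := by
  rw [semistable_iff_mono] at *
  obtain ⟨hX, h⟩ := h
  refine ⟨fun hY => hX (hY.of_iso e), fun W f hf hW => ?_⟩
  rw [← Z.phase_iso e]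
  exact h W (f ≫ e.inv) (by have := hf; infer_instance) hW

lemma semistable_nz {X : C} (h : Z.Semistable X) : ¬ IsZero X := h.1

/-- The phase of a nonzero quotient of a semistable object is at least the phase. -/
lemma phase_le_of_epi_semistable {A X : C} (hA : Z.Semistable A) (g : A ⟶ X) [Epi g]
    (hX : ¬ IsZero X) : Z.phase A ≤ Z.phase X := by
  have hZ := Z.Z_kernel g
  by_cases hK : IsZero (kernel g)
  · rw [Z.Z_isZero hK, zero_add] at hZ
    exact le_of_eq (Z.phase_congr hZ)
  · have hKA : Z.phase (kernel g) ≤ Z.phase A :=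
      ((semistable_iff_mono Z A).1 hA).2 _ (kernel.ι g) inferInstance hK
    have hAnz := hA.1
    rw [Z.phase_le_iff hK hAnz] at hKA
    rw [Z.phase_le_iff hAnz hX]
    rw [cross_right_eq hZ]
    rwa [cross_left_eq hZ] at hKA



end CentralCharge

namespace CentralCharge

variable (Z : CentralCharge C)

/-- Relation: `X` is a "subobject of `Y` with strictly bigger phase". -/
def R1 (X Y : C) : Prop := (∃ f : X ⟶ Y, Mono f) ∧ Z.phase Y < Z.phase X

/-- Relation: `Y` is a "quotient of `X` with strictly smaller phase". -/
def R2 (Y X : C) : Prop := (∃ f : X ⟶ Y, Epi f) ∧ Z.phase Y < Z.phase X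

instance : IsIrrefl C Z.R1 := ⟨fun _ h => lt_irrefl _ h.2⟩
instance : IsTrans C Z.R1 :=
  ⟨fun _ _ _ h h' => ⟨⟨h.1.choose ≫ h'.1.choose,
    by have := h.1.choose_spec; have := h'.1.choose_spec; exact mono_comp _ _⟩,
    h'.2.trans h.2⟩⟩
instance : IsStrictOrder C Z.R1 := ⟨⟩

instance : IsIrrefl C Z.R2 := ⟨fun _ h => lt_irrefl _ h.2⟩
instance : IsTrans C Z.R2 :=
  ⟨fun _ _ _ h h' => ⟨⟨h'.1.choose ≫ h.1.choose,
    by have := h.1.choose_spec; have := h'.1.choose_spec; exact epi_comp _ _⟩,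
    h.2.trans h'.2⟩⟩
instance : IsStrictOrder C Z.R2 := ⟨⟩

lemma wf_R1 (h1 : ¬ ∃ (E : ℕ → C) (f : ∀ j : ℕ, E (j + 1) ⟶ E j),
      (∀ j, Mono (f j)) ∧ (∀ j, Z.phase (E j) < Z.phase (E (j + 1)))) :
    WellFounded Z.R1 := by
  rw [RelEmbedding.wellFounded_iff_isEmpty]
  constructor
  intro emb
  apply h1
  have hrel : ∀ j : ℕ, Z.R1 (emb (j + 1)) (emb j) :=
    fun j => emb.map_rel_iff.2 (Nat.lt_succ_self j)
  exact ⟨fun n => emb n, fun j => (hrel j).1.choose,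
    fun j => (hrel j).1.choose_spec, fun j => (hrel j).2⟩

lemma wf_R2 (h2 : ¬ ∃ (E : ℕ → C) (f : ∀ j : ℕ, E j ⟶ E (j + 1)),
      (∀ j, Epi (f j)) ∧ (∀ j, Z.phase (E (j + 1)) < Z.phase (E j))) :
    WellFounded Z.R2 := by
  rw [RelEmbedding.wellFounded_iff_isEmpty]
  constructor
  intro emb
  apply h2
  have hrel : ∀ j : ℕ, Z.R2 (emb (j + 1)) (emb j) :=
    fun j => emb.map_rel_iff.2 (Nat.lt_succ_self j)
  exact ⟨fun n => emb n, fun j => (hrel j).1.choose,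
    fun j => (hrel j).1.choose_spec, fun j => (hrel j).2⟩

/-- `π : E ⟶ B` is a maximal destabilizing quotient. -/
def IsMdq (E B : C) (π : E ⟶ B) : Prop :=
  Epi π ∧ ¬ IsZero B ∧ ∀ (B' : C) (ρ : E ⟶ B'), Epi ρ → ¬ IsZero B' →
    Z.phase B ≤ Z.phase B' ∧ (Z.phase B' = Z.phase B → ∃ σ : B ⟶ B', π ≫ σ = ρ)

lemma exists_semistable_destabilizer (w1 : WellFounded Z.R1) {E : C}
    (hE : ¬ IsZero E) (hns : ¬ Z.Semistable E) :
    ∃ (A : C) (a : A ⟶ E), Mono a ∧ Z.Semistable A ∧ Z.phase E < Z.phase A := by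
  set S : Set C := {X | ¬ IsZero X ∧ (∃ f : X ⟶ E, Mono f) ∧ Z.phase E < Z.phase X} with hS
  have hne : S.Nonempty := by
    rw [semistable_iff_mono] at hns
    push_neg at hns
    obtain ⟨X, f, hf, hX, hφ⟩ := hns hE
    exact ⟨X, hX, ⟨f, hf⟩, hφ⟩
  obtain ⟨A, hA, hmin⟩ := w1.has_min S hne
  obtain ⟨hAnz, ⟨a, ha⟩, hφ⟩ := hA
  haveI := ha
  refine ⟨A, a, ha, ?_, hφ⟩
  rw [semistable_iff_mono]
  refine ⟨hAnz, fun X g hg hX => ?_⟩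
  by_contra hc
  push_neg at hc
  haveI := hg
  exact hmin X ⟨hX, ⟨g ≫ a, mono_comp _ _⟩, hφ.trans hc⟩ ⟨⟨g, hg⟩, hc⟩

theorem exists_mdq (w1 : WellFounded Z.R1) (w2 : WellFounded Z.R2)
    (E : C) (hE : ¬ IsZero E) : ∃ (B : C) (π : E ⟶ B), Z.IsMdq E B π := by
  revert hE
  refine WellFounded.induction w2 (C := fun E => ¬ IsZero E → ∃ (B : C) (π : E ⟶ B), Z.IsMdq E B π)
    E ?_
  clear E
  intro E IH hE
  by_cases hss : Z.Semistable E
  · exact ⟨E, 𝟙 E, inferInstance, hE, fun B' ρ hρ hB' =>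
      ⟨by haveI := hρ; exact phase_le_of_epi_semistable Z hss ρ hB',
       fun _ => ⟨ρ, Category.id_comp ρ⟩⟩⟩
  · obtain ⟨A, a, hmono, hA, hφ⟩ := Z.exists_semistable_destabilizer w1 hE hss
    haveI := hmono
    have hAnz := hA.1
    have hE'nz : ¬ IsZero (cokernel a) := by
      intro h0
      haveI : Epi a := epi_of_isZero_cokernel a h0
      haveI : IsIso a := isIso_of_mono_of_epi a
      rw [Z.phase_iso (asIso a)] at hφ
      exact lt_irrefl _ hφ
    have hZE : Z.Z E = Z.Z A + Z.Z (cokernel a) := Z.Z_cokernel a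
    have hφ' : Z.phase (cokernel a) < Z.phase E := by
      rw [Z.phase_lt_iff hE'nz hE, cross_left_eq' hZE]
      have := (Z.phase_lt_iff hE hAnz).1 hφ
      rwa [cross_right_eq' hZE] at this
    obtain ⟨B, π', hπ', hB, hprop⟩ := IH (cokernel a) ⟨⟨cokernel.π a, inferInstance⟩, hφ'⟩ hE'nz
    haveI := hπ'
    refine ⟨B, cokernel.π a ≫ π', epi_comp _ _, hB, ?_⟩
    intro B' ρ hρ hB'
    haveI := hρ
    have hφBE' : Z.phase B ≤ Z.phase (cokernel a) := (hprop (cokernel a) (𝟙 _) inferInstance hE'nz).1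
    have hZB' : Z.Z B' = Z.Z (image (a ≫ ρ)) + Z.Z (cokernel (a ≫ ρ)) := by
      have h' := Z.Z_cokernel (image.ι (a ≫ ρ))
      rwa [Z.Z_iso (cokernelImageι (a ≫ ρ))] at h'
    by_cases hX0 : IsZero (image (a ≫ ρ))
    · have hh : a ≫ ρ = 0 := by
        rw [← image.fac (a ≫ ρ), hX0.eq_of_tgt (factorThruImage (a ≫ ρ)) 0, zero_comp]
      have hfac : cokernel.π a ≫ cokernel.desc a ρ hh = ρ := cokernel.π_desc a ρ hh
      haveI : Epi (cokernel.desc a ρ hh) := by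
        have h'' : Epi (cokernel.π a ≫ cokernel.desc a ρ hh) := by rwa [hfac]
        exact epi_of_epi (cokernel.π a) _
      have hm := hprop B' (cokernel.desc a ρ hh) inferInstance hB'
      refine ⟨hm.1, fun heq => ?_⟩
      obtain ⟨σ, hσ⟩ := hm.2 heq
      exact ⟨σ, by rw [Category.assoc, hσ, hfac]⟩
    · have hφX : Z.phase A ≤ Z.phase (image (a ≫ ρ)) :=
        phase_le_of_epi_semistable Z hA (factorThruImage (a ≫ ρ)) hX0
      have hBX : Z.phase B < Z.phase (image (a ≫ ρ)) :=
        lt_of_le_of_lt (hφBE'.trans hφ'.le) (lt_of_lt_of_le hφ hφX)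
      by_cases hT0 : IsZero (cokernel (a ≫ ρ))
      · haveI : Epi (a ≫ ρ) := epi_of_isZero_cokernel _ hT0
        have hAB' : Z.phase A ≤ Z.phase B' := phase_le_of_epi_semistable Z hA (a ≫ ρ) hB'
        have hstrict : Z.phase B < Z.phase B' :=
          lt_of_le_of_lt (hφBE'.trans hφ'.le) (lt_of_lt_of_le hφ hAB')
        exact ⟨hstrict.le, fun heq => absurd heq (by linarith)⟩
      · have hcond : a ≫ (ρ ≫ cokernel.π (a ≫ ρ)) = 0 := by
          rw [← Category.assoc]; exact cokernel.condition _
        have hδfac : cokernel.π a ≫ cokernel.desc a _ hcond = ρ ≫ cokernel.π (a ≫ ρ) :=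
          cokernel.π_desc a _ hcond
        haveI : Epi (cokernel.desc a _ hcond) := by
          have h'' : Epi (cokernel.π a ≫ cokernel.desc a _ hcond) := by
            rw [hδfac]; exact epi_comp _ _
          exact epi_of_epi (cokernel.π a) _
        have hφT : Z.phase B ≤ Z.phase (cokernel (a ≫ ρ)) :=
          (hprop (cokernel (a ≫ ρ)) (cokernel.desc a _ hcond) inferInstance hT0).1
        have c1 : 0 < cross (Z.Z B) (Z.Z (image (a ≫ ρ))) := (Z.phase_lt_iff hB hX0).1 hBX
        have c2 : 0 ≤ cross (Z.Z B) (Z.Z (cokernel (a ≫ ρ))) := (Z.phase_le_iff hB hT0).1 hφT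
        have c3 : cross (Z.Z B) (Z.Z B') =
            cross (Z.Z B) (Z.Z (image (a ≫ ρ))) + cross (Z.Z B) (Z.Z (cokernel (a ≫ ρ))) := by
          rw [hZB', cross_add_right]
        have hle : Z.phase B ≤ Z.phase B' := by
          rw [Z.phase_le_iff hB hB', c3]; linarith
        refine ⟨hle, fun heq => ?_⟩
        have h4 : Z.phase B' ≤ Z.phase B := heq.le
        rw [Z.phase_le_iff hB' hB, cross_antisymm] at h4
        rw [c3] at h4
        linarith

end CentralCharge

namespace CentralCharge

variable (Z : CentralCharge C)

lemma semistable_of_mdq {E B : C} {π : E ⟶ B} (h : Z.IsMdq E B π) : Z.Semistable B := by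
  obtain ⟨hπ, hB, hprop⟩ := h
  haveI := hπ
  rw [semistable_iff_mono]
  refine ⟨hB, fun X f hf hX => ?_⟩
  by_contra hc
  push_neg at hc
  haveI := hf
  have hcok : ¬ IsZero (cokernel f) := by
    intro h0
    haveI : Epi f := epi_of_isZero_cokernel f h0
    haveI : IsIso f := isIso_of_mono_of_epi f
    rw [Z.phase_iso (asIso f)] at hc
    exact lt_irrefl _ hc
  have hq := (hprop (cokernel f) (π ≫ cokernel.π f) (epi_comp _ _) hcok).1
  have hZ : Z.Z B = Z.Z X + Z.Z (cokernel f) := Z.Z_cokernel f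
  have c1 : 0 < cross (Z.Z B) (Z.Z X) := (Z.phase_lt_iff hB hX).1 hc
  have c2 : cross (Z.Z B) (Z.Z (cokernel f)) = cross (Z.Z X) (Z.Z (cokernel f)) :=
    cross_right_eq hZ
  have c3 : cross (Z.Z B) (Z.Z X) = cross (Z.Z (cokernel f)) (Z.Z X) := cross_right_eq' hZ
  have c4 := cross_antisymm (Z.Z X) (Z.Z (cokernel f))
  have c5 := (Z.phase_le_iff hB hcok).1 hq
  linarith

lemma nz_of_mdq {E B : C} {π : E ⟶ B} (h : Z.IsMdq E B π) : ¬ IsZero E := by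
  haveI := h.1
  exact nz_of_epi π h.2.1

/-- If the kernel of an mdq is nonzero, phases compare strictly. -/
lemma mdq_phase_lt {E B : C} {π : E ⟶ B} (h : Z.IsMdq E B π)
    (hK : ¬ IsZero (kernel π)) :
    Z.phase B < Z.phase E ∧ Z.phase E < Z.phase (kernel π) := by
  obtain ⟨hπ, hB, hprop⟩ := h
  haveI := hπ
  have hE : ¬ IsZero E := nz_of_epi π hB
  have hle := (hprop E (𝟙 E) inferInstance hE).1
  have hstrict : Z.phase B < Z.phase E := by
    rcases lt_or_eq_of_le hle with h' | h'
    · exact h'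
    · exfalso
      obtain ⟨σ, hσ⟩ := (hprop E (𝟙 E) inferInstance hE).2 h'.symm
      have hσπ : σ ≫ π = 𝟙 B := by
        rw [← cancel_epi π, ← Category.assoc, hσ, Category.id_comp, Category.comp_id]
      haveI : IsIso π := ⟨σ, hσ, hσπ⟩
      have : kernel.ι π = 0 := by
        rw [← cancel_mono π, kernel.condition, zero_comp]
      exact hK (isZero_of_mono_eq_zero _ this)
  have hZ : Z.Z E = Z.Z (kernel π) + Z.Z B := Z.Z_kernel π
  refine ⟨hstrict, ?_⟩
  rw [Z.phase_lt_iff hE hK]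
  have c1 := (Z.phase_lt_iff hB hE).1 hstrict
  rw [cross_left_eq' hZ] at c1
  rwa [cross_right_eq' hZ]

/-- Every nonzero quotient of the kernel of an mdq has phase above `φ(B)`. -/
lemma mdq_kernel_quot {E B : C} {π : E ⟶ B} (h : Z.IsMdq E B π)
    {Q : C} (e : kernel π ⟶ Q) (he : Epi e) (hQ : ¬ IsZero Q) :
    Z.phase B < Z.phase Q := by
  obtain ⟨hπ, hB, hprop⟩ := h
  haveI := hπ
  haveI := he
  set m : kernel e ⟶ E := kernel.ι e ≫ kernel.ι π with hm
  haveI : Mono m := mono_comp _ _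
  have hmπ : m ≫ π = 0 := by rw [hm, Category.assoc, kernel.condition, comp_zero]
  have hβfac : cokernel.π m ≫ cokernel.desc m π hmπ = π := cokernel.π_desc m π hmπ
  haveI : Epi (cokernel.desc m π hmπ) := by
    have h'' : Epi (cokernel.π m ≫ cokernel.desc m π hmπ) := by rwa [hβfac]
    exact epi_of_epi (cokernel.π m) _
  have hM : ¬ IsZero (cokernel m) := nz_of_epi (cokernel.desc m π hmπ) hB
  -- Z arithmetic
  have zE1 : Z.Z E = Z.Z (kernel e) + Z.Z (cokernel m) := Z.Z_cokernel m
  have zE2 : Z.Z E = Z.Z (kernel π) + Z.Z B := Z.Z_kernel π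
  have zK : Z.Z (kernel π) = Z.Z (kernel e) + Z.Z Q := Z.Z_kernel e
  have hZM : Z.Z (cokernel m) = Z.Z Q + Z.Z B := by linear_combination zE2 + zK - zE1
  -- strictness
  have hle := (hprop (cokernel m) (cokernel.π m) inferInstance hM).1
  have hstrict : Z.phase B < Z.phase (cokernel m) := by
    rcases lt_or_eq_of_le hle with h' | h'
    · exact h'
    · exfalso
      obtain ⟨σ, hσ⟩ := (hprop (cokernel m) (cokernel.π m) inferInstance hM).2 h'.symm
      have h1 : cokernel.desc m π hmπ ≫ σ = 𝟙 (cokernel m) := by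
        rw [← cancel_epi (cokernel.π m), ← Category.assoc, hβfac, hσ, Category.comp_id]
      have h2 : σ ≫ cokernel.desc m π hmπ = 𝟙 B := by
        rw [← cancel_epi π, ← Category.assoc, hσ, hβfac, Category.comp_id]
      haveI : IsIso (cokernel.desc m π hmπ) := ⟨σ, h1, h2⟩
      have hZBM : Z.Z (cokernel m) = Z.Z B := Z.Z_iso (asIso (cokernel.desc m π hmπ))
      have : Z.Z Q = 0 := by linear_combination hZBM - hZM
      exact Z.Z_ne_zero hQ this
  rw [Z.phase_lt_iff hB hQ]
  have c1 := (Z.phase_lt_iff hB hM).1 hstrict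
  rwa [cross_left_eq' hZM] at c1

end CentralCharge

namespace CentralCharge

section Filtration

/-- Push a subobject of `K` forward along a mono `ι : K ⟶ E`. -/
noncomputable def mkc {K E : C} (ι : K ⟶ E) [Mono ι] (X : Subobject K) : Subobject E :=
  Subobject.mk (X.arrow ≫ ι)

lemma mkc_mono {K E : C} (ι : K ⟶ E) [Mono ι] {X Y : Subobject K} (h : X ≤ Y) :
    mkc ι X ≤ mkc ι Y :=
  Subobject.mk_le_mk_of_comm (Subobject.ofLE X Y h)
    (by rw [← Category.assoc, Subobject.ofLE_arrow])

lemma mkc_bot {K E : C} (ι : K ⟶ E) [Mono ι] : mkc ι (⊥ : Subobject K) = ⊥ := by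
  rw [mkc, Subobject.mk_eq_bot_iff_zero]
  exact isZero_bot.eq_of_src _ _

/-- A cokernel whose source is zero is the target. -/
noncomputable def cokerIsoOfIsZeroSrc {X Y : C} (f : X ⟶ Y) (h : IsZero X) :
    cokernel f ≅ Y :=
  (cokernel.mapIso f (0 : X ⟶ Y) (Iso.refl X) (Iso.refl Y)
    (by rw [h.eq_of_src f 0]; simp)) ≪≫ cokernelZeroIsoTarget

/-- quotient by `⊥ ≤ ⊤` is the object itself -/
noncomputable def cokerBotTop (E : C) :
    cokernel (Subobject.ofLE (⊥ : Subobject E) ⊤ le_top) ≅ E :=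
  (cokerIsoOfIsZeroSrc _ isZero_bot) ≪≫ asIso (⊤ : Subobject E).arrow

/-- quotient by `X ≤ ⊤` is the cokernel of the arrow of `X`. -/
noncomputable def cokerOfLETop {K : C} (X : Subobject K) :
    cokernel (Subobject.ofLE X ⊤ le_top) ≅ cokernel X.arrow :=
  cokernel.mapIso _ X.arrow (Iso.refl _) (asIso (⊤ : Subobject K).arrow)
    (by simp [Subobject.ofLE_arrow])

/-- Pushing forward along a mono preserves the subquotients. -/
noncomputable def cokerMkcIso {K E : C} (ι : K ⟶ E) [Mono ι] {X Y : Subobject K} (h : X ≤ Y) :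
    cokernel (Subobject.ofLE (mkc ι X) (mkc ι Y) (mkc_mono ι h)) ≅
      cokernel (Subobject.ofLE X Y h) := by
  refine cokernel.mapIso _ _ (Subobject.underlyingIso (X.arrow ≫ ι))
    (Subobject.underlyingIso (Y.arrow ≫ ι)) ?_
  rw [← cancel_mono (Y.arrow ≫ ι)]
  simp only [mkc, Category.assoc, Subobject.underlyingIso_hom_comp_eq_mk,
    Subobject.ofLE_arrow, Subobject.ofLE_arrow_assoc]
  exact Subobject.ofLE_arrow _

/-- `mkc ι ⊤` with top: cokernel is cokernel of `ι`. -/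
noncomputable def cokerMkcTopIso {K E : C} (ι : K ⟶ E) [Mono ι] :
    cokernel (Subobject.ofLE (mkc ι (⊤ : Subobject K)) (⊤ : Subobject E)
      le_top) ≅ cokernel ι := by
  refine cokernel.mapIso _ ι
    ((Subobject.underlyingIso ((⊤ : Subobject K).arrow ≫ ι)) ≪≫
      asIso (⊤ : Subobject K).arrow) (asIso (⊤ : Subobject E).arrow) ?_
  simp only [mkc, Iso.trans_hom, asIso_hom, Category.assoc,
    Subobject.underlyingIso_hom_comp_eq_mk, Subobject.ofLE_arrow]
  exact Subobject.ofLE_arrow _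

/-- congruence for `quotObj`. -/
noncomputable def quotObjIso {E : C} {n : ℕ} (F : Fin (n + 1) → Subobject E) (hF : Monotone F)
    (j : Fin n) {X Y : Subobject E} (h : X ≤ Y)
    (hX : F j.castSucc = X) (hY : F j.succ = Y) :
    quotObj F hF j ≅ cokernel (Subobject.ofLE X Y h) := by
  subst hX hY
  exact Iso.refl _

/-- The cokernel of the kernel of an epi. -/
noncomputable def cokerKernelIso {E B : C} (π : E ⟶ B) [Epi π] :
    cokernel (kernel.ι π) ≅ B :=
  IsColimit.coconePointUniqueUpToIso (cokernelIsCokernel _)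
    (Abelian.epiIsCokernelOfKernel (KernelFork.ofι (kernel.ι π) (kernel.condition π))
      (kernelIsKernel π))

end Filtration

end CentralCharge

theorem CentralCharge.hasHN_aux (Z : CentralCharge C)
    (w1 : WellFounded Z.R1) (w2 : WellFounded Z.R2) : Z.HasHN := by
  intro E₀ hE₀
  revert hE₀
  refine WellFounded.induction w1 (C := fun E => ¬ IsZero E →
    ∃ (n : ℕ) (F : Fin (n + 1) → Subobject E) (hF : Monotone F),
      F 0 = ⊥ ∧ F (Fin.last n) = ⊤ ∧
      (∀ j : Fin n, Z.Semistable (quotObj F hF j)) ∧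
      (∀ j k : Fin n, j < k → Z.phase (quotObj F hF k) < Z.phase (quotObj F hF j))) E₀ ?_
  clear E₀
  intro E IH hE
  obtain ⟨B, π, hmdq⟩ := Z.exists_mdq w1 w2 E hE
  haveI hπ : Epi π := hmdq.1
  have hB : ¬ IsZero B := hmdq.2.1
  by_cases hK : IsZero (kernel π)
  · -- base case: E is semistable
    haveI : Mono π := Abelian.mono_of_kernel_ι_eq_zero π (hK.eq_of_src _ _)
    haveI : IsIso π := isIso_of_mono_of_epi π
    have hEss : Z.Semistable E := semistable_of_iso Z (asIso π).symm (Z.semistable_of_mdq hmdq)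
    set F : Fin 2 → Subobject E := fun j => if j = 0 then ⊥ else ⊤ with hFdef
    have hFmono : Monotone F := by
      intro a b hab
      by_cases ha : a = 0
      · by_cases hb : b = 0 <;> simp [hFdef, ha, hb]
      · have hb : b ≠ 0 := by
          intro h; subst h
          exact ha (le_antisymm (by simpa using hab) (Fin.zero_le a))
        simp [hFdef, ha, hb]
    have h0 : F 0 = ⊥ := by simp [hFdef]
    have h1 : F (Fin.last 1) = ⊤ := by
      rw [hFdef]; exact if_neg (by decide)
    have hquot : ∀ j : Fin 1, Nonempty (quotObj F hFmono j ≅ E) := by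
      intro j
      have hj : j = 0 := Subsingleton.elim _ _
      subst hj
      refine ⟨quotObjIso F hFmono 0 (le_top (a := (⊥ : Subobject E))) ?_ ?_ ≪≫ cokerBotTop E⟩
      · rw [hFdef]; exact if_pos (by decide)
      · rw [hFdef]; exact if_neg (by decide)
    refine ⟨1, F, hFmono, h0, h1, ?_, ?_⟩
    · intro j
      exact semistable_of_iso Z (hquot j).some.symm hEss
    · intro j k hjk
      rw [Subsingleton.elim j k] at hjk
      exact absurd hjk (lt_irrefl _)
  · -- inductive step
    obtain ⟨hBE, hEK⟩ := Z.mdq_phase_lt hmdq hK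
    obtain ⟨n', F', hF', h0', hlast', hsemi', hphase'⟩ :=
      IH (kernel π) ⟨⟨kernel.ι π, inferInstance⟩, hEK⟩ hK
    obtain ⟨m, rfl⟩ : ∃ m, n' = m + 1 := by
      rcases n' with _ | m
      · exfalso
        have hbt : (⊥ : Subobject (kernel π)) = ⊤ := by rw [← h0', ← hlast']; rfl
        apply hK
        have h2 : IsZero ((⊤ : Subobject (kernel π)) : C) := by
          rw [← hbt]; exact isZero_bot
        exact h2.of_iso (asIso (⊤ : Subobject (kernel π)).arrow).symm
      · exact ⟨m, rfl⟩
    set ι : kernel π ⟶ E := kernel.ι π with hι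
    set F : Fin (m + 3) → Subobject E :=
      Fin.snoc (fun i : Fin (m + 2) => mkc ι (F' i)) ⊤ with hFdef
    have hFmono : Monotone F := by
      intro a b hab
      by_cases hbl : b = Fin.last (m + 2)
      · subst hbl; rw [hFdef]; simp only [Fin.snoc_last]; exact le_top
      · have hal : a ≠ Fin.last (m + 2) := fun h => hbl (le_antisymm (Fin.le_last b) (h ▸ hab))
        rw [← Fin.castSucc_castPred a hal, ← Fin.castSucc_castPred b hbl] at hab ⊢
        rw [hFdef]
        simp only [Fin.snoc_castSucc]
        exact mkc_mono ι (hF' (by rwa [Fin.castSucc_le_castSucc_iff] at hab))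
    have hbot : F 0 = ⊥ := by
      have h00 : (0 : Fin (m + 3)) = Fin.castSucc 0 := by simp
      rw [hFdef, h00, Fin.snoc_castSucc, h0', mkc_bot]
    have htop : F (Fin.last (m + 2)) = ⊤ := by rw [hFdef]; exact Fin.snoc_last _ _
    -- top layer iso
    have htopIso : Nonempty (quotObj F hFmono (Fin.last (m + 1)) ≅ B) := by
      refine ⟨quotObjIso F hFmono (Fin.last (m + 1))
        (le_top (a := mkc ι (⊤ : Subobject (kernel π)))) ?_ ?_
        ≪≫ cokerMkcTopIso ι ≪≫ cokerKernelIso π⟩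
      · rw [hFdef, Fin.snoc_castSucc, hlast']
      · rw [Fin.succ_last]; exact htop
    -- lower layers
    have hlayer : ∀ i : Fin (m + 1),
        Nonempty (quotObj F hFmono i.castSucc ≅ quotObj F' hF' i) := by
      intro i
      refine ⟨quotObjIso F hFmono i.castSucc
        (mkc_mono ι (hF' (Fin.castSucc_lt_succ (i := i)).le)) ?_ ?_
        ≪≫ cokerMkcIso ι (hF' (Fin.castSucc_lt_succ (i := i)).le)⟩
      · rw [hFdef, Fin.snoc_castSucc]
      · rw [Fin.succ_castSucc, hFdef, Fin.snoc_castSucc]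
    -- the least layer of the kernel filtration, as quotient of the kernel
    have hlastQ : Z.phase B < Z.phase (quotObj F' hF' (Fin.last m)) := by
      have e : quotObj F' hF' (Fin.last m) ≅
          cokernel ((F' ((Fin.last m).castSucc)).arrow) :=
        quotObjIso F' hF' (Fin.last m) le_top rfl
          (by rw [Fin.succ_last]; exact hlast') ≪≫ cokerOfLETop _
      have hQnz : ¬ IsZero (cokernel ((F' ((Fin.last m).castSucc)).arrow)) := by
        intro h0
        exact (hsemi' (Fin.last m)).1 (h0.of_iso e)
      have hlt := Z.mdq_kernel_quot hmdq
        (cokernel.π ((F' ((Fin.last m).castSucc)).arrow)) inferInstance hQnz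
      rw [Z.phase_iso e]
      exact hlt
    have hptop : Z.phase (quotObj F hFmono (Fin.last (m + 1))) = Z.phase B :=
      Z.phase_iso htopIso.some
    have hpl : ∀ i : Fin (m + 1),
        Z.phase (quotObj F hFmono i.castSucc) = Z.phase (quotObj F' hF' i) :=
      fun i => Z.phase_iso (hlayer i).some
    have hBlt : ∀ i : Fin (m + 1), Z.phase B < Z.phase (quotObj F' hF' i) := by
      intro i
      rcases eq_or_lt_of_le (Fin.le_last i) with he | hl
      · rw [he]; exact hlastQ
      · exact hlastQ.trans (hphase' i (Fin.last m) hl)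
    refine ⟨m + 2, F, hFmono, hbot, htop, ?_, ?_⟩
    · intro j
      refine Fin.lastCases ?_ (fun i => ?_) j
      · exact semistable_of_iso Z htopIso.some.symm (Z.semistable_of_mdq hmdq)
      · exact semistable_of_iso Z (hlayer i).some.symm (hsemi' i)
    · intro j k hjk
      revert hjk
      refine Fin.lastCases ?_ (fun i' => ?_) k <;> intro hjk
      · obtain ⟨i, rfl⟩ := Fin.exists_castSucc_eq.2 (ne_of_lt hjk)
        rw [hptop, hpl i]
        exact hBlt i
      · obtain ⟨i, rfl⟩ := Fin.exists_castSucc_eq.2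
          (ne_of_lt (lt_of_lt_of_le hjk (Fin.le_last _)))
        rw [hpl i', hpl i]
        exact hphase' i i' (by rwa [Fin.castSucc_lt_castSucc_iff] at hjk)

/-- Bridgeland, Prop. 2.4: if there is no infinite descending chain of subobjects
`⋯ ⊂ E_{j+1} ⊂ E_j ⊂ ⋯ ⊂ E₁` with strictly increasing phases, and no infinite chain of
quotients `E₁ ↠ E₂ ↠ ⋯` with strictly decreasing phases, then the central charge `Z` has the
Harder–Narasimhan property. -/
theorem hn_of_chain_conditions (Z : CentralCharge C)
    (h1 : ¬ ∃ (E : ℕ → C) (f : ∀ j : ℕ, E (j + 1) ⟶ E j),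
      (∀ j, Mono (f j)) ∧ (∀ j, Z.phase (E j) < Z.phase (E (j + 1))))
    (h2 : ¬ ∃ (E : ℕ → C) (f : ∀ j : ℕ, E j ⟶ E (j + 1)),
      (∀ j, Epi (f j)) ∧ (∀ j, Z.phase (E (j + 1)) < Z.phase (E j))) :
    Z.HasHN := by
  exact CentralCharge.hasHN_aux Z (Z.wf_R1 h1) (Z.wf_R2 h2)

end Stmt2
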